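/- Let p be an odd prime with Pisano period l_p = 2p+2 and β(p) = 2, and let C = ⟨f(x)⟩ be the cyclic code of length 2p+2 over F_p generated by the Fibonacci polynomial f(x). Then C is a one-weight code: every one of its p² − 1 nonzero codewords has Hamming weight exactly 2p. -/

import Mathlib

/-
The code consists of the windows `(a F_i + b F_{i+1})_{i < 2p+2}`: since `F_{l-1} = 1` and
`F_l = 0`, the cyclic shift maps the window of `(a, b)` to that of `(b - a, a)`, and the
generator is the window of `(1, 0)`. As `β(p) = 2`, the rank of apparition of `p` is `p + 1`, so
`F_n = 0 ↔ p + 1 ∣ n`. By d'Ocagne's identity the vectors `(F_i, F_{i+1})`, `i ≤ p`, are pairwise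
non-proportional, hence run once through the `p + 1` points of the projective line. So a nonzero
window vanishes at exactly one `i ≤ p`, and, as `F_{n+p+1} = F_{p+2} F_n`, at exactly one further
index, `i + p + 1`.
-/

open Polynomial

/-- The Fibonacci sequence over `ZMod p`: `F 0 = 0`, `F 1 = 1`, `F (n+2) = F (n+1) + F n`. -/
def fibMod (p : ℕ) : ℕ → ZMod p
  | 0 => 0
  | 1 => 1
  | n + 2 => fibMod p (n + 1) + fibMod p n

/-- The Pisano period of `p`: the least `t > 0` with `F t = F 0 = 0` and `F (t+1) = F 1 = 1`. -/
noncomputable def pisano (p : ℕ) : ℕ :=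
  sInf {t : ℕ | 0 < t ∧ fibMod p t = 0 ∧ fibMod p (t + 1) = 1}

/-- `β(p)`: the number of indices `0 ≤ i < l_p` with `F i = 0` in `ZMod p`. -/
noncomputable def betaP (p : ℕ) : ℕ :=
  ((Finset.range (pisano p)).filter fun i => fibMod p i = 0).card

/-- The Fibonacci polynomial `f(x) = ∑_{i=0}^{l_p - 1} F_i x^i` over `ZMod p`. -/
noncomputable def fibPoly (p : ℕ) : (ZMod p)[X] :=
  ∑ i ∈ Finset.range (pisano p), C (fibMod p i) * X ^ i

/-- Cyclic shift of a vector of length `l`: the shift `v ↦ (v_{l-1}, v_0, …, v_{l-2})`,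
which corresponds to multiplication by `x` modulo `x^l - 1` on coefficient vectors. -/
def cyclicShift (p l : ℕ) (v : Fin l → ZMod p) : Fin l → ZMod p :=
  fun i => v ⟨((i : ℕ) + (l - 1)) % l, Nat.mod_lt _ i.pos⟩

/-- The coefficient vector of length `l` of a polynomial. -/
def polyVec (p l : ℕ) (g : (ZMod p)[X]) : Fin l → ZMod p := fun i => g.coeff i

/-- The cyclic code of length `l` generated by `g`: the ideal generated by the image of `g`
in `F_p[x]/(x^l - 1)`, identified with the subspace of `F_p^l` of coefficient vectors via
`a_0 + a_1 x + ⋯ + a_{l-1} x^{l-1} ↦ (a_0, …, a_{l-1})`; equivalently (since multiplication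
by `x` is the cyclic shift), the `F_p`-span of all cyclic shifts of the coefficient vector
of `g`. -/
noncomputable def cyclicCode (p l : ℕ) (g : (ZMod p)[X]) :
    Submodule (ZMod p) (Fin l → ZMod p) :=
  Submodule.span (ZMod p) {w | ∃ k : ℕ, w = (cyclicShift p l)^[k] (polyVec p l g)}

/-- The cyclic code of length `l` generated by the Fibonacci polynomial `f(x)`. -/
noncomputable def fibCode (p l : ℕ) : Submodule (ZMod p) (Fin l → ZMod p) :=
  cyclicCode p l (fibPoly p)

theorem Nat.dvd_fib_iff_dvd_of_isLeast {d m : ℕ} (hm : IsLeast {k | 0 < k ∧ d ∣ Nat.fib k} m)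
    (n : ℕ) : d ∣ Nat.fib n ↔ m ∣ n := by
  refine ⟨fun hn => ?_, fun h => hm.1.2.trans (Nat.fib_dvd m n h)⟩
  have hgcd : d ∣ Nat.fib (m.gcd n) := Nat.fib_gcd m n ▸ Nat.dvd_gcd hm.1.2 hn
  have hle : m ≤ m.gcd n := hm.2 ⟨Nat.gcd_pos_of_pos_left n hm.1.1, hgcd⟩
  have heq : m.gcd n = m := le_antisymm (Nat.gcd_le_left n hm.1.1) hle
  exact heq ▸ Nat.gcd_dvd_right m n

theorem mul_eq_mul_of_mul_add_mul_eq_zero {R : Type*} [CommRing R] [NoZeroDivisors R]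
    {a b x y x' y' : R} (hab : a ≠ 0 ∨ b ≠ 0)
    (h : a * x + b * y = 0) (h' : a * x' + b * y' = 0) : x * y' = y * x' := by
  rcases hab with ha | hb
  · exact sub_eq_zero.1 <| (mul_eq_zero.1 (by linear_combination y' * h - y * h')).resolve_left ha
  · exact sub_eq_zero.1 <| (mul_eq_zero.1 (by linear_combination x * h' - x' * h)).resolve_left hb

/-- Pigeonhole on the projective line `ℙ¹(K)`, which has `|K| + 1` points. -/
theorem exists_mul_add_mul_eq_zero {K : Type*} [Field K] [Fintype K] {ι : Type*} [Fintype ι]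
    (hι : Fintype.card ι = Fintype.card K + 1) (x y : ι → K)
    (hxy : ∀ i j, x i * y j = y i * x j → i = j) (a b : K) :
    ∃ i, a * x i + b * y i = 0 := by
  classical
  let slope : ι → Option K := fun i => if x i = 0 then none else some (y i / x i)
  have hinj : Function.Injective slope := by
    intro i j hij
    apply hxy
    by_cases hi : x i = 0 <;> by_cases hj : x j = 0 <;> simp [slope, hi, hj] at hij ⊢
    field_simp at hij
    linear_combination -hij
  have hsurj : Function.Surjective slope :=
    ((Fintype.bijective_iff_injective_and_card _).2 ⟨hinj, by simp [hι]⟩).2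
  by_cases hb : b = 0
  · obtain ⟨i, hi⟩ := hsurj none
    refine ⟨i, ?_⟩
    by_cases hxi : x i = 0 <;> simp_all [slope]
  · obtain ⟨i, hi⟩ := hsurj (some (-a / b))
    refine ⟨i, ?_⟩
    by_cases hxi : x i = 0 <;> simp only [slope, hxi, if_true, if_false, reduceCtorEq,
      Option.some.injEq] at hi
    field_simp at hi
    linear_combination hi

section fibMod

variable {p : ℕ}

theorem fibMod_add_two (n : ℕ) : fibMod p (n + 2) = fibMod p (n + 1) + fibMod p n := rfl

theorem fibMod_eq_natCast_fib (n : ℕ) : fibMod p n = Nat.fib n := by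
  induction n using Nat.twoStepInduction with
  | zero => simp [fibMod]
  | one => simp [fibMod]
  | more n ih₀ ih₁ => rw [fibMod_add_two, ih₀, ih₁, Nat.fib_add_two]; push_cast; ring

theorem fibMod_eq_zero_iff_dvd_fib (n : ℕ) : fibMod p n = 0 ↔ p ∣ Nat.fib n := by
  rw [fibMod_eq_natCast_fib, ZMod.natCast_eq_zero_iff]

theorem fibMod_add_of_fibMod_eq_zero {m : ℕ} (hm : fibMod p m = 0) (n : ℕ) :
    fibMod p (n + m) = fibMod p (m + 1) * fibMod p n := by
  cases n with
  | zero => simp [hm, fibMod]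
  | succ n =>
    have h := Nat.fib_add m n
    rw [add_right_comm, add_comm n m, fibMod_eq_natCast_fib, h]
    simp only [Nat.cast_add, Nat.cast_mul, ← fibMod_eq_natCast_fib, hm, zero_mul, zero_add]

theorem fibMod_docagne (n d : ℕ) :
    fibMod p (n + d) * fibMod p (n + 1) - fibMod p (n + d + 1) * fibMod p n =
      (-1) ^ n * fibMod p d := by
  induction n with
  | zero => simp [fibMod]
  | succ n ih =>
    rw [add_right_comm n 1 d, fibMod_add_two (n + d), fibMod_add_two n]
    linear_combination (-1 : ZMod p) * ih

theorem fibMod_pisano (h : pisano p ≠ 0) :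
    fibMod p (pisano p) = 0 ∧ fibMod p (pisano p + 1) = 1 := by
  have hne : {t | 0 < t ∧ fibMod p t = 0 ∧ fibMod p (t + 1) = 1}.Nonempty :=
    Set.nonempty_iff_ne_empty.2 fun he => h (by rw [pisano, he, Nat.sInf_empty])
  exact (Nat.sInf_mem hne).2

theorem exists_fibMod_eq_zero_iff_dvd (h : pisano p ≠ 0) :
    ∃ m, 0 < m ∧ ∀ n, fibMod p n = 0 ↔ m ∣ n := by
  have hex : ∃ k, 0 < k ∧ p ∣ Nat.fib k :=
    ⟨pisano p, Nat.pos_of_ne_zero h, (fibMod_eq_zero_iff_dvd_fib _).1 (fibMod_pisano h).1⟩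
  refine ⟨Nat.find hex, (Nat.find_spec hex).1, fun n => ?_⟩
  rw [fibMod_eq_zero_iff_dvd_fib]
  exact Nat.dvd_fib_iff_dvd_of_isLeast (Nat.isLeast_find hex) n

theorem betaP_mul_eq_pisano {m : ℕ} (hm : 0 < m) (hzero : ∀ n, fibMod p n = 0 ↔ m ∣ n) :
    betaP p * m = pisano p := by
  have hdvd : m ∣ pisano p := by
    rcases eq_or_ne (pisano p) 0 with h | h
    · exact h ▸ dvd_zero m
    · exact (hzero _).1 (fibMod_pisano h).1
  have hcount : betaP p = Nat.count (· ≡ 0 [MOD m]) (pisano p) := by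
    simp only [betaP, Nat.count_eq_card_filter_range, Nat.modEq_zero_iff_dvd, hzero]
  rw [hcount, Nat.count_modEq_card _ hm, Nat.zero_mod, Nat.mod_eq_zero_of_dvd hdvd,
    if_neg (lt_irrefl 0), add_zero, Nat.div_mul_cancel hdvd]

end fibMod

section RankOfApparition

variable {p m : ℕ} (hzero : ∀ n, fibMod p n = 0 ↔ m ∣ n)
include hzero

theorem dvd_sub_of_fibMod_mul_eq_mul {i j : ℕ} (hij : i ≤ j)
    (h : fibMod p i * fibMod p (j + 1) = fibMod p (i + 1) * fibMod p j) : m ∣ j - i := by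
  have hdoc := fibMod_docagne (p := p) i (j - i)
  rw [Nat.add_sub_cancel' hij, mul_comm (fibMod p j), mul_comm (fibMod p (j + 1)), ← h,
    sub_self, eq_comm, (isUnit_neg_one.pow i).mul_right_eq_zero] at hdoc
  exact (hzero _).1 hdoc

theorem dvd_sub_of_fibMod_comb_eq_zero [Fact p.Prime] {a b : ZMod p} (hab : a ≠ 0 ∨ b ≠ 0)
    {i j : ℕ} (hij : i ≤ j) (hi : a * fibMod p i + b * fibMod p (i + 1) = 0)
    (hj : a * fibMod p j + b * fibMod p (j + 1) = 0) : m ∣ j - i :=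
  dvd_sub_of_fibMod_mul_eq_mul hzero hij (mul_eq_mul_of_mul_add_mul_eq_zero hab hi hj)

end RankOfApparition

section RankSucc

variable {p : ℕ} [Fact p.Prime] (hzero : ∀ n, fibMod p n = 0 ↔ p + 1 ∣ n)
include hzero

theorem exists_lt_fibMod_comb_eq_zero (a b : ZMod p) :
    ∃ i < p + 1, a * fibMod p i + b * fibMod p (i + 1) = 0 := by
  have hinj : ∀ i j : Fin (p + 1),
      fibMod p i * fibMod p (j + 1) = fibMod p (i + 1) * fibMod p j → i = j := by
    have key : ∀ i j : Fin (p + 1), i ≤ j →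
        fibMod p i * fibMod p (j + 1) = fibMod p (i + 1) * fibMod p j → i = j := by
      intro i j hij h
      have := Nat.eq_zero_of_dvd_of_lt (dvd_sub_of_fibMod_mul_eq_mul hzero hij h) (by omega)
      exact Fin.ext (by omega)
    intro i j h
    rcases le_total i j with hij | hji
    · exact key i j hij h
    · exact (key j i hji (by linear_combination -h)).symm
  obtain ⟨i, hi⟩ := exists_mul_add_mul_eq_zero (by simp [ZMod.card])
    (fun i : Fin (p + 1) => fibMod p i) (fun i => fibMod p (i + 1)) hinj a b
  exact ⟨i, i.2, hi⟩

theorem exists_fibMod_comb_eq_zero_iff {a b : ZMod p} (hab : a ≠ 0 ∨ b ≠ 0) :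
    ∃ i₀ < p + 1, ∀ n < 2 * p + 2,
      a * fibMod p n + b * fibMod p (n + 1) = 0 ↔ n = i₀ ∨ n = i₀ + (p + 1) := by
  obtain ⟨i₀, hi₀, hzero₀⟩ := exists_lt_fibMod_comb_eq_zero hzero a b
  have hperiod : fibMod p (p + 1) = 0 := (hzero _).2 dvd_rfl
  refine ⟨i₀, hi₀, fun n hn => ⟨fun h => ?_, ?_⟩⟩
  · rcases le_total i₀ n with hle | hle
    · obtain ⟨k, hk⟩ := dvd_sub_of_fibMod_comb_eq_zero hzero hab hle hzero₀ h
      have hk2 : k < 2 := Nat.lt_of_mul_lt_mul_left (a := p + 1) (by omega)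
      interval_cases k <;> omega
    · have := Nat.eq_zero_of_dvd_of_lt (dvd_sub_of_fibMod_comb_eq_zero hzero hab hle h hzero₀)
        (by omega)
      omega
  · rintro (rfl | rfl)
    · exact hzero₀
    · rw [fibMod_add_of_fibMod_eq_zero hperiod, add_right_comm i₀,
        fibMod_add_of_fibMod_eq_zero hperiod]
      linear_combination fibMod p (p + 1 + 1) * hzero₀

end RankSucc

section Code

variable {p : ℕ}

def fibWord (p L : ℕ) : ZMod p × ZMod p →ₗ[ZMod p] Fin L → ZMod p where
  toFun c i := c.1 * fibMod p i + c.2 * fibMod p (i + 1)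
  map_add' c d := by ext i; simp only [Prod.fst_add, Prod.snd_add, Pi.add_apply]; ring
  map_smul' r c := by
    ext i; simp only [Prod.smul_fst, Prod.smul_snd, smul_eq_mul, RingHom.id_apply, Pi.smul_apply]
    ring

@[simp]
theorem fibWord_apply (L : ℕ) (c : ZMod p × ZMod p) (i : Fin L) :
    fibWord p L c i = c.1 * fibMod p i + c.2 * fibMod p (i + 1) := rfl

theorem cyclicShift_fibWord {L : ℕ} (hL0 : fibMod p L = 0) (hL1 : fibMod p (L + 1) = 1)
    (a b : ZMod p) : cyclicShift p L (fibWord p L (a, b)) = fibWord p L (b - a, a) := by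
  ext ⟨i, hi⟩
  simp only [cyclicShift, fibWord_apply]
  cases i with
  | zero =>
    obtain ⟨L, rfl⟩ := Nat.exists_eq_add_one_of_ne_zero hi.ne'
    have hL : fibMod p L = 1 := by rwa [fibMod_add_two, hL0, zero_add] at hL1
    simp [Nat.mod_eq_of_lt (Nat.lt_succ_self L), hL, hL0, fibMod]
  | succ i =>
    have hmod : (i + 1 + (L - 1)) % L = i := by
      rw [show i + 1 + (L - 1) = i + L by omega, Nat.add_mod_right, Nat.mod_eq_of_lt (by omega)]
    simp only [hmod, fibMod_add_two]
    ring

theorem polyVec_fibPoly : polyVec p (pisano p) (fibPoly p) = fibWord p (pisano p) (1, 0) := by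
  ext ⟨i, hi⟩
  simp [polyVec, fibPoly, hi]

theorem fibCode_eq_range (h : pisano p ≠ 0) :
    fibCode p (pisano p) = LinearMap.range (fibWord p (pisano p)) := by
  obtain ⟨hL0, hL1⟩ := fibMod_pisano h
  have hshift := cyclicShift_fibWord hL0 hL1
  apply le_antisymm
  · refine Submodule.span_le.2 ?_
    rintro _ ⟨k, rfl⟩
    induction k with
    | zero => exact ⟨(1, 0), polyVec_fibPoly.symm⟩
    | succ k ih =>
      obtain ⟨⟨a, b⟩, hab⟩ := ih
      exact ⟨(b - a, a), by rw [Function.iterate_succ_apply', ← hab, hshift]⟩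
  · rintro _ ⟨⟨a, b⟩, rfl⟩
    have h₀ : fibWord p (pisano p) (1, 0) ∈ fibCode p (pisano p) :=
      Submodule.subset_span ⟨0, polyVec_fibPoly.symm⟩
    have h₁ : fibWord p (pisano p) (-1, 1) ∈ fibCode p (pisano p) :=
      Submodule.subset_span ⟨1, by rw [Function.iterate_one, polyVec_fibPoly, hshift]; simp⟩
    have hab : (a, b) = (a + b) • ((1 : ZMod p), (0 : ZMod p)) + b • (-1, 1) := by
      ext <;> simp
    rw [hab, map_add, map_smul, map_smul]
    exact add_mem (Submodule.smul_mem _ _ h₀) (Submodule.smul_mem _ _ h₁)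

theorem fibWord_injective {L : ℕ} (hL : 2 ≤ L) : Function.Injective (fibWord p L) := by
  rw [← LinearMap.ker_eq_bot, LinearMap.ker_eq_bot']
  rintro ⟨a, b⟩ h
  have h₀ : b = 0 := by simpa [fibMod] using congrFun h ⟨0, by omega⟩
  have h₁ : a + b = 0 := by simpa [fibMod] using congrFun h ⟨1, by omega⟩
  exact Prod.mk_eq_zero.2 ⟨by linear_combination h₁ - h₀, h₀⟩

end Code

theorem ncard_setOf_mem_range_ne_zero {R V W : Type*} [Semiring R] [AddCommMonoid V]
    [AddCommMonoid W] [Module R V] [Module R W] [Finite V] {f : V →ₗ[R] W}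
    (hf : Function.Injective f) :
    {w | w ∈ LinearMap.range f ∧ w ≠ 0}.ncard = Nat.card V - 1 := by
  have h : {w | w ∈ LinearMap.range f ∧ w ≠ 0} = Set.range f \ {0} := rfl
  rw [h, Set.ncard_sdiff_singleton_of_mem (Set.mem_range.2 ⟨0, map_zero f⟩),
    Set.ncard_range_of_injective hf]

theorem hammingNorm_fibWord {p : ℕ} [Fact p.Prime] (hzero : ∀ n, fibMod p n = 0 ↔ p + 1 ∣ n)
    {c : ZMod p × ZMod p} (hc : c ≠ 0) : hammingNorm (fibWord p (2 * p + 2) c) = 2 * p := by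
  obtain ⟨a, b⟩ := c
  have hab : a ≠ 0 ∨ b ≠ 0 := not_and_or.1 fun h => hc (Prod.mk_eq_zero.2 h)
  obtain ⟨i₀, hi₀, hzeros⟩ := exists_fibMod_comb_eq_zero_iff hzero hab
  have hsupp : Finset.univ.filter (fun i => fibWord p (2 * p + 2) (a, b) i ≠ 0) =
      {⟨i₀, by omega⟩, ⟨i₀ + (p + 1), by omega⟩}ᶜ := by
    ext i
    rw [Finset.mem_filter]
    simp only [Finset.mem_univ, true_and, Finset.mem_compl,
      Finset.mem_insert, Finset.mem_singleton, fibWord_apply, Fin.ext_iff, ne_eq,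
      hzeros i i.2]
  rw [hammingNorm, hsupp, Finset.card_compl, Fintype.card_fin,
    Finset.card_pair (by simp [Fin.ext_iff])]
  omega

theorem fibCode_one_weight_general (p : ℕ) [Fact p.Prime]
    (hl : pisano p = 2 * p + 2) (hb : betaP p = 2) :
    Set.ncard {v | v ∈ fibCode p (2 * p + 2) ∧ v ≠ 0} = p ^ 2 - 1 ∧
      ∀ v ∈ fibCode p (2 * p + 2), v ≠ 0 → hammingNorm v = 2 * p := by
  have hl₀ : pisano p ≠ 0 := by omega
  obtain ⟨m, hm, hzero⟩ := exists_fibMod_eq_zero_iff_dvd hl₀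
  have hm' : m = p + 1 := by
    have := betaP_mul_eq_pisano hm hzero
    rw [hl, hb] at this
    omega
  subst hm'
  have hcode : fibCode p (2 * p + 2) = LinearMap.range (fibWord p (2 * p + 2)) :=
    hl ▸ fibCode_eq_range hl₀
  refine ⟨?_, fun v hv hv₀ => ?_⟩
  · rw [hcode, ncard_setOf_mem_range_ne_zero (fibWord_injective (by omega)), Nat.card_prod,
      Nat.card_zmod, sq]
  · rw [hcode] at hv
    obtain ⟨c, rfl⟩ := hv
    exact hammingNorm_fibWord hzero (by rintro rfl; exact hv₀ (map_zero _))

/-- For an odd prime `p` with `l_p = 2p + 2` and `β(p) = 2`, the cyclic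
code `C = ⟨f(x)⟩` of length `2p + 2` is a one-weight code: it has exactly `p² - 1` nonzero
codewords, and every nonzero codeword has Hamming weight exactly `2p`. -/
theorem fibCode_one_weight (p : ℕ) [Fact p.Prime] (hodd : Odd p)
    (hl : pisano p = 2 * p + 2) (hb : betaP p = 2) :
    Set.ncard {v | v ∈ fibCode p (2 * p + 2) ∧ v ≠ 0} = p ^ 2 - 1 ∧
      ∀ v ∈ fibCode p (2 * p + 2), v ≠ 0 → hammingNorm v = 2 * p :=
  fibCode_one_weight_general p hl hb
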